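/- For s > 0 let p_s : ℕ → ℝ be the Poisson probability mass function p_s(x) = e^{−s}·s^x/x!, and let H(s) = −Σ_{x=0}^∞ p_s(x)·log p_s(x) be the entropy of the Poisson distribution with mean s. There exists a constant C > 0 such that for all s ∈ (0, 1/2], |H(s) − s·log(1/s)| ≤ C·s. -/

import Mathlib

/-!
Since `-log p_s(n) = s - n log s + log n!`, the entropy is `H(s) = s - s log s + E[log N!]` for
`N ~ Poisson(s)`. The correction is nonnegative and, as `log n! ≤ n log n ≤ n (n - 1)`, bounded by
the second factorial moment `E[N (N - 1)] = s²`. Hence `H(s) - s log(1/s) ∈ [s, s + s²]`.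
-/

open Real
open scoped Nat

theorem hasSum_descFactorial_mul_pow_div_factorial (k : ℕ) (s : ℝ) :
    HasSum (fun n : ℕ => (n.descFactorial k : ℝ) * s ^ n / n !) (s ^ k * exp s) := by
  rw [← hasSum_nat_add_iff' k, Finset.sum_eq_zero fun n hn => by
    simp [Nat.descFactorial_eq_zero_iff_lt.2 (Finset.mem_range.1 hn)], sub_zero]
  rw [exp_eq_exp_ℝ]
  refine ((NormedSpace.expSeries_div_hasSum_exp s).mul_left (s ^ k)).congr_fun fun m => ?_
  have h := Nat.factorial_mul_descFactorial (Nat.le_add_left k m)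
  rw [Nat.add_sub_cancel] at h
  have hd : ((m + k).descFactorial k : ℝ) ≠ 0 := by
    exact_mod_cast (Nat.descFactorial_pos.2 (Nat.le_add_left k m)).ne'
  rw [← h, Nat.cast_mul, pow_add]
  field_simp

theorem log_factorial_le (n : ℕ) : log (n ! : ℝ) ≤ n * (n - 1) := by
  rcases n.eq_zero_or_pos with rfl | hn
  · simp
  calc log (n ! : ℝ) ≤ log ((n : ℝ) ^ n) :=
        log_le_log (by positivity) (by exact_mod_cast Nat.factorial_le_pow n)
    _ = n * log n := log_pow n n
    _ ≤ n * (n - 1) := by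
        gcongr
        exact log_le_sub_one_of_pos (by exact_mod_cast hn)

noncomputable def poissonWeight (s : ℝ) (n : ℕ) : ℝ := exp (-s) * s ^ n / n !

theorem hasSum_descFactorial_mul_poissonWeight (k : ℕ) (s : ℝ) :
    HasSum (fun n => (n.descFactorial k : ℝ) * poissonWeight s n) (s ^ k) := by
  have h := (hasSum_descFactorial_mul_pow_div_factorial k s).mul_left (exp (-s))
  rw [mul_left_comm, ← exp_add, neg_add_cancel, exp_zero, mul_one] at h
  exact h.congr_fun fun n => by rw [poissonWeight]; ring

theorem poissonWeight_nonneg {s : ℝ} (hs : 0 ≤ s) (n : ℕ) : 0 ≤ poissonWeight s n := by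
  unfold poissonWeight
  positivity

theorem poissonWeight_mul_log_factorial_le {s : ℝ} (hs : 0 ≤ s) (n : ℕ) :
    poissonWeight s n * log (n ! : ℝ) ≤ n.descFactorial 2 * poissonWeight s n := by
  rw [Nat.cast_descFactorial_two, mul_comm]
  exact mul_le_mul_of_nonneg_right (log_factorial_le n) (poissonWeight_nonneg hs n)

theorem poissonWeight_mul_log_factorial_nonneg {s : ℝ} (hs : 0 ≤ s) (n : ℕ) :
    0 ≤ poissonWeight s n * log (n ! : ℝ) :=
  mul_nonneg (poissonWeight_nonneg hs n) (log_nonneg (by exact_mod_cast n.factorial_pos))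

theorem summable_poissonWeight_mul_log_factorial {s : ℝ} (hs : 0 ≤ s) :
    Summable fun n => poissonWeight s n * log (n ! : ℝ) :=
  .of_nonneg_of_le (poissonWeight_mul_log_factorial_nonneg hs)
    (poissonWeight_mul_log_factorial_le hs) (hasSum_descFactorial_mul_poissonWeight 2 s).summable

theorem tsum_poissonWeight_mul_log_factorial_le {s : ℝ} (hs : 0 ≤ s) :
    ∑' n, poissonWeight s n * log (n ! : ℝ) ≤ s ^ 2 :=
  hasSum_le (poissonWeight_mul_log_factorial_le hs)
    (summable_poissonWeight_mul_log_factorial hs).hasSum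
    (hasSum_descFactorial_mul_poissonWeight 2 s)

theorem poissonWeight_mul_log {s : ℝ} (hs : 0 < s) (n : ℕ) :
    poissonWeight s n * log (poissonWeight s n) =
      log s * (n * poissonWeight s n) - s * poissonWeight s n
        - poissonWeight s n * log (n ! : ℝ) := by
  have hlog : log (poissonWeight s n) = -s + n * log s - log (n ! : ℝ) := by
    rw [poissonWeight, log_div (by positivity) (by positivity), log_mul (by positivity)
      (by positivity), log_exp, log_pow]
  rw [hlog]
  ring

theorem hasSum_poissonWeight_mul_log {s : ℝ} (hs : 0 < s) :
    HasSum (fun n => poissonWeight s n * log (poissonWeight s n))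
      (s * log s - s - ∑' n, poissonWeight s n * log (n ! : ℝ)) := by
  have hmean := hasSum_descFactorial_mul_poissonWeight 1 s
  have hmass := hasSum_descFactorial_mul_poissonWeight 0 s
  simp only [Nat.descFactorial_one, Nat.descFactorial_zero, Nat.cast_one, one_mul, pow_one,
    pow_zero] at hmean hmass
  have h := ((hmean.mul_left (log s)).sub (hmass.mul_left s)).sub
    (summable_poissonWeight_mul_log_factorial hs.le).hasSum
  rw [mul_one, mul_comm (log s)] at h
  exact h.congr_fun (poissonWeight_mul_log hs)

/-- Small-time asymptotic of the Poisson entropy: with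
`H(s) = -∑_x p_s(x) log p_s(x)` the Shannon entropy of a Poisson random
variable with mean `s`, there is a constant `C > 0` such that
`|H(s) - s·log(1/s)| ≤ C·s` for all `s ∈ (0, 1/2]`. -/
theorem poisson_entropy_small_time : ∃ C : ℝ, 0 < C ∧
    ∀ s : ℝ, 0 < s → s ≤ 1/2 →
      |(-∑' x : ℕ, (Real.exp (-s) * s ^ x / (Nat.factorial x : ℝ)) *
            Real.log (Real.exp (-s) * s ^ x / (Nat.factorial x : ℝ))) -
          s * Real.log (1/s)| ≤ C * s := by
  refine ⟨3 / 2, by norm_num, fun s hs hs_le => ?_⟩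
  change |-∑' n, poissonWeight s n * log (poissonWeight s n) - _| ≤ _
  set L := ∑' n, poissonWeight s n * log (n ! : ℝ)
  have hL_nonneg : 0 ≤ L := tsum_nonneg (poissonWeight_mul_log_factorial_nonneg hs.le)
  have hL_le : L ≤ s ^ 2 := tsum_poissonWeight_mul_log_factorial_le hs.le
  rw [(hasSum_poissonWeight_mul_log hs).tsum_eq, one_div, log_inv,
    show -(s * log s - s - L) - s * -log s = s + L by ring, abs_of_nonneg (by positivity)]
  nlinarith
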